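/- Suppose K = F₂. If two bases S and S' of X are t-equivalent, then Q_S = Q_{S'} and Tr^α(S) = Tr^α(S') for every α ∈ X*. -/
import Mathlib

/-- Affine transvections `T^{α(s)}_{s,k} : x ↦ x + k(ω(x,s) + α(s))·s`. -/
def affTransvectionSet {K X : Type*} [Field K] [AddCommGroup X] [Module K X]
    (ω : X →ₗ[K] X →ₗ[K] K) (S : Set X) (α : X → K) : Set (Equiv.Perm X) :=
  {f | ∃ s ∈ S, ∃ k : K, k ≠ 0 ∧ ∀ x, f x = x + (k * (ω x s + α s)) • s}

/-- The affine transvection group `Tr^α(S)`. -/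
def affTransvectionGroup {K X : Type*} [Field K] [AddCommGroup X] [Module K X]
    (ω : X →ₗ[K] X →ₗ[K] K) (S : Set X) (α : X → K) : Subgroup (Equiv.Perm X) :=
  Subgroup.closure (affTransvectionSet ω S α)

/-- One t-equivalence step: replace `t ∈ S` by `s + t`, where `s, t ∈ S`
and `ω(s,t) = 1`. -/
def tStep {X : Type*} [AddCommGroup X] [Module (ZMod 2) X]
    (ω : X →ₗ[ZMod 2] X →ₗ[ZMod 2] ZMod 2) (S S' : Set X) : Prop :=
  ∃ s ∈ S, ∃ t ∈ S, s ≠ t ∧ ω s t = 1 ∧ S' = insert (s + t) (S \ {t})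

/-- t-equivalence. -/
def tEquiv {X : Type*} [AddCommGroup X] [Module (ZMod 2) X]
    (ω : X →ₗ[ZMod 2] X →ₗ[ZMod 2] ZMod 2) : Set X → Set X → Prop :=
  Relation.ReflTransGen (tStep ω)

lemma z2add : ∀ a : ZMod 2, a + a = 0 := by decide
lemma z2one : ∀ k : ZMod 2, k ≠ 0 → k = 1 := by decide
lemma z2eq : ∀ a b : ZMod 2, a + b = 0 → a = b := by decide
lemma z2cases : ∀ c : ZMod 2, c = 0 ∨ c = 1 := by decide

section Aux
variable {X : Type*} [AddCommGroup X] [Module (ZMod 2) X]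
  (ω : X →ₗ[ZMod 2] X →ₗ[ZMod 2] ZMod 2) (α : X → ZMod 2)

lemma selfadd (x : X) : x + x = 0 := by
  rw [← two_smul (ZMod 2), show ((2:ZMod 2)) = 0 from rfl, zero_smul]

variable (halt : ∀ x, ω x x = 0)

/-- The affine transvection as a permutation. -/
def tv (s : X) : Equiv.Perm X where
  toFun x := x + (ω x s + α s) • s
  invFun x := x + (ω x s + α s) • s
  left_inv x := by
    simp only [map_add, map_smul, LinearMap.add_apply, LinearMap.smul_apply, smul_eq_mul,
      halt s, mul_zero, add_zero]
    rw [add_assoc, ← add_smul, z2add, zero_smul, add_zero]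
  right_inv x := by
    simp only [map_add, map_smul, LinearMap.add_apply, LinearMap.smul_apply, smul_eq_mul,
      halt s, mul_zero, add_zero]
    rw [add_assoc, ← add_smul, z2add, zero_smul, add_zero]

lemma tv_apply (s x : X) : tv ω α halt s x = x + (ω x s + α s) • s := rfl

include halt in
lemma hsym (x y : X) : ω x y = ω y x := by
  have h := halt (x + y)
  simp only [map_add, LinearMap.add_apply, halt x, halt y, zero_add, add_zero] at h
  exact (z2eq _ _ h).symm

lemma tv_comp (hα : ∀ x y, α (x+y) = α x + α y) (s t : X) (hst : ω s t = 1) :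
    tv ω α halt s * tv ω α halt t * tv ω α halt s = tv ω α halt (s + t) := by
  have hts : ω t s = 1 := (hsym ω halt t s).trans hst
  ext x
  simp only [Equiv.Perm.mul_apply, tv_apply, map_add, map_smul, LinearMap.add_apply,
    LinearMap.smul_apply, smul_eq_mul, halt s, halt t, hst, hts, hα, smul_add]
  match_scalars <;>
    (generalize ω x s = a; generalize ω x t = b; generalize α s = c; generalize α t = d;
     revert a b c d; decide)

lemma tv_mem {S : Set X} {s : X} (hs : s ∈ S) :
    tv ω α halt s ∈ affTransvectionSet ω S α :=
  ⟨s, hs, 1, one_ne_zero, fun x => by rw [tv_apply, one_mul]⟩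

lemma mem_set_iff {S : Set X} {f : Equiv.Perm X} :
    f ∈ affTransvectionSet ω S α ↔ ∃ s ∈ S, f = tv ω α halt s := by
  constructor
  · rintro ⟨s, hs, k, hk, hf⟩
    exact ⟨s, hs, Equiv.ext fun x => by rw [hf, tv_apply, z2one k hk, one_mul]⟩
  · rintro ⟨s, hs, rfl⟩
    exact tv_mem ω α halt hs

lemma tv_mem_group {S : Set X} {s : X} (hs : s ∈ S) :
    tv ω α halt s ∈ affTransvectionGroup ω S α :=
  Subgroup.subset_closure (tv_mem ω α halt hs)

include halt in
lemma group_step (hα : ∀ x y, α (x+y) = α x + α y) {S S' : Set X} (h : tStep ω S S') :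
    affTransvectionGroup ω S α = affTransvectionGroup ω S' α := by
  obtain ⟨s, hs, t, ht, hne, hst, rfl⟩ := h
  have hsS' : s ∈ insert (s + t) (S \ {t}) := Or.inr ⟨hs, hne⟩
  have hstS' : s + t ∈ insert (s + t) (S \ {t}) := Or.inl rfl
  have hsst : ω s (s + t) = 1 := by
    rw [map_add, halt s, zero_add, hst]
  have hback : s + (s + t) = t := by
    rw [← add_assoc, selfadd s, zero_add]
  apply le_antisymm <;> refine (Subgroup.closure_le _).2 ?_ <;> intro f hf <;>
    rw [mem_set_iff ω α halt] at hf <;> obtain ⟨u, hu, rfl⟩ := hf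
  · by_cases hut : u = t
    · subst hut
      have hcomp : tv ω α halt u =
          tv ω α halt s * tv ω α halt (s + u) * tv ω α halt s := by
        rw [tv_comp ω α halt hα s (s + u) hsst, hback]
      rw [hcomp]
      exact Subgroup.mul_mem _
        (Subgroup.mul_mem _ (tv_mem_group ω α halt hsS') (tv_mem_group ω α halt hstS'))
        (tv_mem_group ω α halt hsS')
    · exact tv_mem_group ω α halt (Or.inr ⟨hu, hut⟩)
  · rcases hu with rfl | ⟨huS, -⟩
    · rw [← tv_comp ω α halt hα s t hst]
      exact Subgroup.mul_mem _
        (Subgroup.mul_mem _ (tv_mem_group ω α halt hs) (tv_mem_group ω α halt ht))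
        (tv_mem_group ω α halt hs)
    · exact tv_mem_group ω α halt huS

lemma Q_step {S S' : Set X} (h : tStep ω S S') (Q : X → ZMod 2)
    (hQp : ∀ x y, Q (x + y) + Q x + Q y = ω x y)
    (hQ1 : ∀ s ∈ S, Q s = 1) : ∀ s ∈ S', Q s = 1 := by
  obtain ⟨s, hs, t, ht, hne, hst, rfl⟩ := h
  intro u hu
  rcases hu with rfl | ⟨huS, -⟩
  · have e := hQp s t
    rw [hQ1 s hs, hQ1 t ht, hst] at e
    rwa [add_assoc, show ((1:ZMod 2) + 1 = 0) from rfl, add_zero] at e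
  · exact hQ1 u huS

end Aux

/-- over `K = 𝔽₂`, if the bases `S` and `S'` of `X` are
t-equivalent, then `Q_S = Q_{S'}` and `Tr^α(S) = Tr^α(S')` for all `α ∈ X*`. -/
theorem stmt12 {X : Type*} [AddCommGroup X] [Module (ZMod 2) X]
    [FiniteDimensional (ZMod 2) X]
    (ω : X →ₗ[ZMod 2] X →ₗ[ZMod 2] ZMod 2) (halt : ∀ x, ω x x = 0)
    (S S' : Set X)
    (hindS : LinearIndependent (ZMod 2) ((↑) : S → X))
    (hspanS : Submodule.span (ZMod 2) S = ⊤)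
    (hindS' : LinearIndependent (ZMod 2) ((↑) : S' → X))
    (hspanS' : Submodule.span (ZMod 2) S' = ⊤)
    (heq : tEquiv ω S S') :
    (∀ Q Q' : X → ZMod 2,
      (∀ s ∈ S, Q s = 1) → (∀ x y, Q (x + y) + Q x + Q y = ω x y) →
      (∀ s ∈ S', Q' s = 1) → (∀ x y, Q' (x + y) + Q' x + Q' y = ω x y) →
      Q = Q') ∧
    (∀ α : Module.Dual (ZMod 2) X,
      affTransvectionGroup ω S ⇑α = affTransvectionGroup ω S' ⇑α) := by
  have key : ∀ Q : X → ZMod 2, (∀ x y, Q (x + y) + Q x + Q y = ω x y) →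
      (∀ s ∈ S, Q s = 1) → ∀ s ∈ S', Q s = 1 := by
    intro Q hQp
    clear hindS' hspanS'
    induction heq with
    | refl => exact fun h => h
    | tail _ hbc ih => exact fun h1 => Q_step ω hbc Q hQp (ih h1)
  constructor
  · intro Q Q' hQ1 hQp hQ'1 hQ'p
    have hQS' : ∀ s ∈ S', Q s = 1 := key Q hQp hQ1
    have hzero : ∀ R : X → ZMod 2, (∀ x y, R (x + y) + R x + R y = ω x y) → R 0 = 0 := by
      intro R hRp
      have e := hRp 0 0
      simp only [add_zero, map_zero, LinearMap.zero_apply] at e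
      rwa [add_assoc, ← add_assoc, z2add, zero_add] at e
    have hQ0 : Q 0 = 0 := hzero Q hQp
    have hQ'0 : Q' 0 = 0 := hzero Q' hQ'p
    let p : Submodule (ZMod 2) X :=
      { carrier := {x | Q x = Q' x}
        add_mem' := by
          intro x y hx hy
          have e : Q (x + y) + Q x + Q y = Q' (x + y) + Q' x + Q' y :=
            (hQp x y).trans (hQ'p x y).symm
          rw [hx, hy] at e
          exact add_right_cancel (add_right_cancel e)
        zero_mem' := by
          show Q 0 = Q' 0
          rw [hQ0, hQ'0]
        smul_mem' := by
          intro c x hx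
          rcases z2cases c with rfl | rfl
          · show Q ((0 : ZMod 2) • x) = Q' ((0 : ZMod 2) • x)
            rw [zero_smul, hQ0, hQ'0]
          · show Q ((1 : ZMod 2) • x) = Q' ((1 : ZMod 2) • x)
            rwa [one_smul] }
    have hsub : S' ⊆ p := fun u hu => (hQS' u hu).trans (hQ'1 u hu).symm
    have hp : p = ⊤ := top_unique (hspanS' ▸ Submodule.span_le.2 hsub)
    funext x
    have hx : x ∈ p := hp ▸ Submodule.mem_top
    exact hx
  · intro α
    clear key hindS' hspanS'
    induction heq with
    | refl => rfl
    | tail _ hbc ih => exact ih.trans (group_step ω ⇑α halt (map_add α) hbc)
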